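/- arXiv:2106.10444 — 3 statements merged into one kernel-verified Lean document; each statement's English description precedes it below -/
import Mathlib

section
/- Let Z be a q×q positive definite Hermitian complex matrix with eigenvalues λ_1 ≥ λ_2 ≥ ... ≥ λ_q > 0, and let X be an arbitrary p×q complex matrix with p ≤ q. Then det(X X†) · ∏_{i=1}^{p} λ_i ≥ det(X Z X†) ≥ det(X X†) · ∏_{i=1}^{p} λ_{q-i+1}. -/
/-! Cauchy–Binet expands `det (X Z Xᴴ)`, after diagonalising `Z = U D Uᴴ` and putting
`Y = X U`, as `∑_S (∏_{j ∈ S} λ_j) |det Y_S|²` over the `p`-subsets `S` of the columns, while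
`det (X Xᴴ) = ∑_S |det Y_S|²`. Each `∏_{j ∈ S} λ_j` lies between the product of the `p` smallest
and that of the `p` largest eigenvalues, so the weighted sum is sandwiched. -/

open Matrix ComplexOrder

theorem Tuple.sort_comp_perm_of_strictMono {p : ℕ} {α : Type*} [LinearOrder α] {g : Fin p → α}
    (hg : StrictMono g) (σ : Equiv.Perm (Fin p)) : Tuple.sort (g ∘ σ) = σ⁻¹ :=
  (Tuple.eq_sort_iff.2 ⟨by simpa [Function.comp_def] using hg.monotone,
    fun _ _ hij h => absurd (hg.injective (by simpa using h)) hij.ne⟩).symm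

/-- An injective tuple is uniquely a strictly monotone tuple composed with a permutation. -/
theorem Finset.sum_injective_eq_sum_strictMono_sum_perm {p : ℕ} {α β : Type*} [Fintype α]
    [LinearOrder α] [AddCommMonoid β] (F : (Fin p → α) → β) :
    ∑ f : Fin p → α with f.Injective, F f =
      ∑ g : Fin p → α with StrictMono g, ∑ σ : Equiv.Perm (Fin p), F (g ∘ σ) := by
  rw [← Finset.sum_product']
  refine Finset.sum_nbij' (fun f => (f ∘ Tuple.sort f, (Tuple.sort f)⁻¹)) (fun x => x.1 ∘ x.2)
    ?_ ?_ ?_ ?_ ?_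
  · intro f hf
    simp only [Finset.mem_filter_univ] at hf
    simpa using (Tuple.monotone_sort f).strictMono_of_injective (hf.comp (Tuple.sort f).injective)
  · rintro ⟨g, σ⟩ hg
    simp only [Finset.mem_product, Finset.mem_filter_univ] at hg
    simpa using hg.1.injective.comp σ.injective
  · intro f _
    ext i; simp
  · rintro ⟨g, σ⟩ hg
    simp only [Finset.mem_product, Finset.mem_filter_univ] at hg
    rw [Tuple.sort_comp_perm_of_strictMono hg.1]
    ext i <;> simp
  · intro f _
    congr 1
    ext i; simp

namespace Fin

variable {p q : ℕ}

theorem val_le_of_strictMono {g : Fin p → Fin q} (hg : StrictMono g) (i : Fin p) :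
    (i : ℕ) ≤ g i := by
  simpa using Finset.card_le_card_of_injOn g (s := Finset.Iic i) (t := Finset.Iic (g i))
    (fun j hj => by simpa using hg.monotone (by simpa using hj)) hg.injective.injOn

theorem castLE_le_apply_sort (hpq : p ≤ q) {h : Fin p → Fin q} (hh : h.Injective) (i : Fin p) :
    castLE hpq i ≤ h (Tuple.sort h i) :=
  val_le_of_strictMono ((Tuple.monotone_sort h).strictMono_of_injective
    (hh.comp (Tuple.sort h).injective)) i

variable {R : Type*} [CommSemiring R] [PartialOrder R] [IsOrderedRing R]

theorem prod_castLE_le_prod_of_monotone (hpq : p ≤ q) {ξ : Fin q → R} (hξ : Monotone ξ)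
    (hξ0 : ∀ j, 0 ≤ ξ j) {h : Fin p → Fin q} (hh : h.Injective) :
    ∏ i, ξ (castLE hpq i) ≤ ∏ i, ξ (h i) := by
  rw [← Equiv.prod_comp (Tuple.sort h) (fun i => ξ (h i))]
  exact Finset.prod_le_prod (fun i _ => hξ0 _) fun i _ => hξ (castLE_le_apply_sort hpq hh i)

theorem prod_le_prod_castLE_of_antitone (hpq : p ≤ q) {ζ : Fin q → R} (hζ : Antitone ζ)
    (hζ0 : ∀ j, 0 ≤ ζ j) {h : Fin p → Fin q} (hh : h.Injective) :
    ∏ i, ζ (h i) ≤ ∏ i, ζ (castLE hpq i) := by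
  rw [← Equiv.prod_comp (Tuple.sort h)]
  exact Finset.prod_le_prod (fun i _ => hζ0 _) fun i _ => hζ (castLE_le_apply_sort hpq hh i)

theorem prod_rev_castLE_le_prod_of_antitone (hpq : p ≤ q) {ζ : Fin q → R} (hζ : Antitone ζ)
    (hζ0 : ∀ j, 0 ≤ ζ j) {h : Fin p → Fin q} (hh : h.Injective) :
    ∏ i, ζ (castLE hpq i).rev ≤ ∏ i, ζ (h i) := by
  simpa using prod_castLE_le_prod_of_monotone hpq (Antitone.comp hζ rev_anti) (fun j => hζ0 _)
    (rev_injective.comp hh)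

end Fin

namespace Matrix

theorem submatrix_mul_diagonal {l m n o α : Type*} [Fintype n] [DecidableEq n] [Fintype o]
    [DecidableEq o] [NonUnitalNonAssocSemiring α] (Y : Matrix m n α) (d : n → α) (r : l → m)
    (c : o → n) :
    (Y * diagonal d).submatrix r c = Y.submatrix r c * diagonal (d ∘ c) := by
  ext i j
  simp

variable {R : Type*} [CommRing R] {p : ℕ} {n : Type*} [Fintype n]

theorem det_mul_eq_sum_prod_mul_det_submatrix (M : Matrix (Fin p) n R)
    (N : Matrix n (Fin p) R) :
    (M * N).det = ∑ f : Fin p → n, (∏ i, N (f i) i) * (M.submatrix id f).det := by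
  simp only [det_apply', mul_apply, Finset.prod_univ_sum, Finset.mul_sum, Fintype.piFinset_univ,
    submatrix_apply, id_eq]
  rw [Finset.sum_comm]
  refine Finset.sum_congr rfl fun f _ => Finset.sum_congr rfl fun σ _ => ?_
  rw [Finset.prod_mul_distrib]
  ring

theorem det_mul_eq_sum_injective [DecidableEq n] (M : Matrix (Fin p) n R)
    (N : Matrix n (Fin p) R) :
    (M * N).det =
      ∑ f : Fin p → n with f.Injective, (∏ i, N (f i) i) * (M.submatrix id f).det := by
  rw [det_mul_eq_sum_prod_mul_det_submatrix, Finset.sum_filter_of_ne]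
  intro f _ hf
  contrapose! hf
  obtain ⟨i, j, hij, hne⟩ : ∃ i j, f i = f j ∧ i ≠ j := by
    simpa [Function.Injective] using hf
  rw [det_zero_of_column_eq hne fun k => by simp [hij], mul_zero]

/-- The Cauchy–Binet formula. -/
theorem det_mul_eq_sum_strictMono [LinearOrder n] (M : Matrix (Fin p) n R)
    (N : Matrix n (Fin p) R) :
    (M * N).det =
      ∑ g : Fin p → n with StrictMono g, (M.submatrix id g).det * (N.submatrix g id).det := by
  rw [det_mul_eq_sum_injective, Finset.sum_injective_eq_sum_strictMono_sum_perm]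
  refine Finset.sum_congr rfl fun g _ => ?_
  calc ∑ σ : Equiv.Perm (Fin p), (∏ i, N (g (σ i)) i) * (M.submatrix id (g ∘ σ)).det
      = (∑ σ : Equiv.Perm (Fin p), (Equiv.Perm.sign σ : R) * ∏ i, N.submatrix g id (σ i) i) *
          (M.submatrix id g).det := by
        rw [Finset.sum_mul]
        refine Finset.sum_congr rfl fun σ _ => ?_
        rw [show M.submatrix id (g ∘ σ) = (M.submatrix id g).submatrix id σ from rfl,
          det_permute']
        simp only [submatrix_apply, id_eq]
        ring
    _ = _ := by rw [← det_apply', mul_comm]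

variable {𝕜 : Type*} [RCLike 𝕜]

theorem det_mul_diagonal_mul_conjTranspose [LinearOrder n] (Y : Matrix (Fin p) n 𝕜)
    (d : n → ℝ) :
    (Y * diagonal (fun j => (d j : 𝕜)) * Yᴴ).det =
      ((∑ g : Fin p → n with StrictMono g,
        ‖(Y.submatrix id g).det‖ ^ 2 * ∏ i, d (g i) : ℝ) : 𝕜) := by
  rw [det_mul_eq_sum_strictMono]
  push_cast
  refine Finset.sum_congr rfl fun g _ => ?_
  rw [submatrix_mul_diagonal, det_mul, det_diagonal, ← conjTranspose_submatrix, det_conjTranspose,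
    RCLike.star_def, ← RCLike.mul_conj]
  simp only [Function.comp_apply]
  ring

theorem det_mul_conjTranspose_eq_sum [LinearOrder n] (Y : Matrix (Fin p) n 𝕜) :
    (Y * Yᴴ).det =
      ((∑ g : Fin p → n with StrictMono g, ‖(Y.submatrix id g).det‖ ^ 2 : ℝ) : 𝕜) := by
  simpa using det_mul_diagonal_mul_conjTranspose Y 1

section

variable {m : Type*} [DecidableEq n]

theorem IsHermitian.mul_mul_conjTranspose_eq {A : Matrix n n 𝕜} (hA : A.IsHermitian)
    (X : Matrix m n 𝕜) :
    X * A * Xᴴ =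
      (X * (hA.eigenvectorUnitary : Matrix n n 𝕜)) * diagonal (fun j => (hA.eigenvalues j : 𝕜)) *
        (X * (hA.eigenvectorUnitary : Matrix n n 𝕜))ᴴ := by
  conv_lhs => rw [hA.spectral_theorem]
  simp only [Unitary.conjStarAlgAut_apply, conjTranspose_mul, Matrix.mul_assoc,
    star_eq_conjTranspose]
  rfl

theorem mul_conjTranspose_mul_unitary (X : Matrix m n 𝕜) {U : Matrix n n 𝕜}
    (hU : U ∈ unitaryGroup n 𝕜) : (X * U) * (X * U)ᴴ = X * Xᴴ := by
  rw [conjTranspose_mul, Matrix.mul_assoc, ← Matrix.mul_assoc U, ← star_eq_conjTranspose U,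
    (mem_unitaryGroup_iff).mp hU, Matrix.one_mul]

end

end Matrix

/-- Lemma 6: eigenvalue sandwich for det(X Z Xᴴ). -/
theorem det_mul_posDef_mul_conjTranspose_sandwich {p q : ℕ} (hpq : p ≤ q)
    (Z : Matrix (Fin q) (Fin q) ℂ) (hZ : Z.PosDef)
    (X : Matrix (Fin p) (Fin q) ℂ)
    (ζ : Fin q → ℝ) (hperm : ∃ σ : Equiv.Perm (Fin q), ζ = hZ.1.eigenvalues ∘ σ)
    (hdec : Antitone ζ) :
    ((X * Z * Xᴴ).det).re ≤ ((X * Xᴴ).det).re * ∏ i : Fin p, ζ (Fin.castLE hpq i) ∧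
    ((X * Xᴴ).det).re * ∏ i : Fin p, ζ ((Fin.castLE hpq i).rev) ≤ ((X * Z * Xᴴ).det).re := by
  obtain ⟨σ, rfl⟩ := hperm
  set U : Matrix (Fin q) (Fin q) ℂ := (hZ.1.eigenvectorUnitary : Matrix (Fin q) (Fin q) ℂ)
  have hXX : ((X * Xᴴ).det).re = ∑ g : Fin p → Fin q with StrictMono g,
      ‖((X * U).submatrix id g).det‖ ^ 2 := by
    rw [← mul_conjTranspose_mul_unitary X hZ.1.eigenvectorUnitary.2, det_mul_conjTranspose_eq_sum]
    exact Complex.ofReal_re _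
  have hXZX : ((X * Z * Xᴴ).det).re = ∑ g : Fin p → Fin q with StrictMono g,
      ‖((X * U).submatrix id g).det‖ ^ 2 * ∏ i, hZ.1.eigenvalues (g i) := by
    rw [hZ.1.mul_mul_conjTranspose_eq, det_mul_diagonal_mul_conjTranspose]
    exact Complex.ofReal_re _
  have hbounds {g : Fin p → Fin q} (hg : StrictMono g) :
      ∏ i, (hZ.1.eigenvalues ∘ σ) (Fin.castLE hpq i).rev ≤ ∏ i, hZ.1.eigenvalues (g i) ∧
        ∏ i, hZ.1.eigenvalues (g i) ≤ ∏ i, (hZ.1.eigenvalues ∘ σ) (Fin.castLE hpq i) := by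
    have hζ0 (j : Fin q) : 0 ≤ (hZ.1.eigenvalues ∘ σ) j := (hZ.eigenvalues_pos _).le
    have hinj := σ.symm.injective.comp hg.injective
    have hprod : ∏ i, hZ.1.eigenvalues (g i) = ∏ i, (hZ.1.eigenvalues ∘ σ) ((σ.symm ∘ g) i) := by
      simp
    rw [hprod]
    exact ⟨Fin.prod_rev_castLE_le_prod_of_antitone hpq hdec hζ0 hinj,
      Fin.prod_le_prod_castLE_of_antitone hpq hdec hζ0 hinj⟩
  rw [hXX, hXZX, Finset.sum_mul, Finset.sum_mul]
  constructor <;> refine Finset.sum_le_sum fun g hg => mul_le_mul_of_nonneg_left ?_ (sq_nonneg _)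
  · exact (hbounds ((Finset.mem_filter_univ g).1 hg)).2
  · exact (hbounds ((Finset.mem_filter_univ g).1 hg)).1
end

section
/- Let G be a random N_r × N_t complex matrix (N_r ≥ N_t) such that G† G is almost surely positive definite, and suppose E[|log det(G† G)|] < ∞. Then E[log₂ det(I + ρ̄ G† G)] ≥ N_t · log₂(1 + ρ̄ · exp((1/N_t) · E[ln det(G† G)])) for every ρ̄ > 0. -/
open Matrix ComplexOrder MeasureTheory

/-!
Let `λᵢ > 0` be the eigenvalues of `GᴴG`, so that `log det(I + ρ̄ GᴴG) = ∑ᵢ f(log λᵢ)` with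
`f(x) = log(1 + ρ̄ eˣ)`. Since `f` is convex it lies above its tangent line `ℓ` at
`c = E[log det(GᴴG)] / N_t`. The lower bound `∑ᵢ ℓ(log λᵢ)` is affine in `log det(GᴴG)`, hence
integrable with mean `N_t f(c)`: this is Jensen's inequality over the eigenvalues and over `Ω`
at once.
-/

namespace Real

theorem log_one_add_mul_exp_tangent_le {ρ : ℝ} (hρ : 0 < ρ) (c u : ℝ) :
    log (1 + ρ * exp c) + ρ * exp c / (1 + ρ * exp c) * (u - c) ≤ log (1 + ρ * exp u) := by
  set a := ρ * exp c
  set t := a / (1 + a)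
  have ha : 0 < a := by positivity
  have ht0 : 0 ≤ t := by positivity
  have ht1 : 0 ≤ 1 - t := by rw [sub_nonneg, div_le_one (by positivity)]; linarith
  have hconv : exp (t * (u - c)) ≤ (1 - t) + t * exp (u - c) := by
    simpa using convexOn_exp.2 (Set.mem_univ 0) (Set.mem_univ (u - c)) ht1 ht0 (by ring)
  have hsplit : 1 + ρ * exp u = (1 + a) * ((1 - t) + t * exp (u - c)) := by
    rw [exp_sub]
    simp only [t, a]
    field_simp
    ring
  calc log (1 + a) + t * (u - c) = log (1 + a) + log (exp (t * (u - c))) := by rw [log_exp]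
    _ ≤ log (1 + a) + log ((1 - t) + t * exp (u - c)) := by gcongr
    _ = log (1 + ρ * exp u) := by rw [hsplit, log_mul (by positivity) (by positivity)]

end Real

namespace Matrix

variable {ι : Type*} [Fintype ι] [DecidableEq ι]

theorem IsHermitian.det_one_add_smul {M : Matrix ι ι ℂ} (hM : M.IsHermitian) (ρ : ℝ) :
    (1 + (ρ : ℂ) • M).det = ∏ i, ((1 + ρ * hM.eigenvalues i : ℝ) : ℂ) := by
  set U : Matrix ι ι ℂ := (hM.eigenvectorUnitary : Matrix ι ι ℂ)
  have hU : U * star U = 1 := mem_unitaryGroup_iff.mp hM.eigenvectorUnitary.2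
  have hconj : 1 + (ρ : ℂ) • M
      = U * diagonal (fun i ↦ ((1 + ρ * hM.eigenvalues i : ℝ) : ℂ)) * star U := by
    conv_lhs => rw [hM.spectral_theorem, Unitary.conjStarAlgAut_apply]
    have : diagonal (fun i ↦ ((1 + ρ * hM.eigenvalues i : ℝ) : ℂ))
        = 1 + (ρ : ℂ) • diagonal (RCLike.ofReal ∘ hM.eigenvalues) := by
      rw [← diagonal_one, ← diagonal_smul, diagonal_add]
      congr 1
      ext i
      simp
    rw [this, mul_add, add_mul, mul_one, hU, mul_smul_comm, smul_mul_assoc]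
  rw [hconj, det_mul_right_comm, hU, one_mul, det_diagonal]

theorem PosDef.log_det_re {M : Matrix ι ι ℂ} (hM : M.PosDef) :
    Real.log M.det.re = ∑ i, Real.log (hM.1.eigenvalues i) := by
  have hdet : M.det.re = ∏ i, hM.1.eigenvalues i := by
    rw [hM.1.det_eq_prod_eigenvalues]
    norm_cast
  rw [hdet, Real.log_prod fun i _ ↦ (hM.eigenvalues_pos i).ne']

theorem PosDef.log_det_one_add_smul_re {M : Matrix ι ι ℂ} (hM : M.PosDef) {ρ : ℝ} (hρ : 0 ≤ ρ) :
    Real.log (1 + (ρ : ℂ) • M).det.re = ∑ i, Real.log (1 + ρ * hM.1.eigenvalues i) := by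
  have hpos (i : ι) : 0 < 1 + ρ * hM.1.eigenvalues i := by
    have := hM.eigenvalues_pos i
    positivity
  have hdet : (1 + (ρ : ℂ) • M).det.re = ∏ i, (1 + ρ * hM.1.eigenvalues i) := by
    rw [hM.1.det_one_add_smul]
    norm_cast
  rw [hdet, Real.log_prod fun i _ ↦ (hpos i).ne']

theorem PosDef.log_det_one_add_smul_re_ge {M : Matrix ι ι ℂ} (hM : M.PosDef) {ρ : ℝ}
    (hρ : 0 < ρ) (c : ℝ) :
    Fintype.card ι * Real.log (1 + ρ * Real.exp c)
        + ρ * Real.exp c / (1 + ρ * Real.exp c) * (Real.log M.det.re - Fintype.card ι * c)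
      ≤ Real.log (1 + (ρ : ℂ) • M).det.re := by
  set t := ρ * Real.exp c / (1 + ρ * Real.exp c)
  set lam := hM.1.eigenvalues
  calc Fintype.card ι * Real.log (1 + ρ * Real.exp c) + t * (Real.log M.det.re - Fintype.card ι * c)
      = ∑ i, (Real.log (1 + ρ * Real.exp c) + t * (Real.log (lam i) - c)) := by
        simp only [hM.log_det_re, Finset.sum_add_distrib, ← Finset.mul_sum, Finset.sum_sub_distrib,
          Finset.sum_const, Finset.card_univ, nsmul_eq_mul, lam]
    _ ≤ ∑ i, Real.log (1 + ρ * lam i) := by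
      gcongr with i
      have := Real.log_one_add_mul_exp_tangent_le hρ c (Real.log (lam i))
      rwa [Real.exp_log (hM.eigenvalues_pos i)] at this
    _ = Real.log (1 + (ρ : ℂ) • M).det.re := (hM.log_det_one_add_smul_re hρ.le).symm

end Matrix

theorem MeasureTheory.ofReal_integral_le_lintegral_ofReal {α : Type*} [MeasurableSpace α]
    {μ : Measure α} (f : α → ℝ) :
    ENNReal.ofReal (∫ a, f a ∂μ) ≤ ∫⁻ a, ENNReal.ofReal (f a) ∂μ := by
  by_cases hf : Integrable f μ
  · rw [integral_eq_lintegral_pos_part_sub_lintegral_neg_part hf]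
    exact (ENNReal.ofReal_le_ofReal (sub_le_self _ ENNReal.toReal_nonneg)).trans
      ENNReal.ofReal_toReal_le
  · simp [integral_undef hf]

theorem ergodic_capacity_lower_bound_general {Nr Nt : ℕ}
    {Ω : Type*} [MeasurableSpace Ω] (μ : Measure Ω) [IsProbabilityMeasure μ]
    (G : Ω → Matrix (Fin Nr) (Fin Nt) ℂ)
    (hpos : ∀ᵐ ω ∂μ, ((G ω)ᴴ * G ω).PosDef)
    (hint : Integrable (fun ω => Real.log ((((G ω)ᴴ * G ω).det).re)) μ)
    (ρ : ℝ) (hρ : 0 < ρ) :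
    ENNReal.ofReal ((Nt : ℝ) * Real.logb 2
        (1 + ρ * Real.exp ((Nt : ℝ)⁻¹ * ∫ ω, Real.log ((((G ω)ᴴ * G ω).det).re) ∂μ)))
      ≤ ∫⁻ ω, ENNReal.ofReal (Real.logb 2 (((1 + (ρ : ℂ) • ((G ω)ᴴ * G ω)).det).re)) ∂μ := by
  rcases Nat.eq_zero_or_pos Nt with rfl | hNt
  · simp
  set L : Ω → ℝ := fun ω ↦ Real.log ((((G ω)ᴴ * G ω).det).re)
  set c := (Nt : ℝ)⁻¹ * ∫ ω, L ω ∂μ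
  set t := ρ * Real.exp c / (1 + ρ * Real.exp c)
  set g : Ω → ℝ := fun ω ↦ (Nt * Real.log (1 + ρ * Real.exp c) + t * (L ω - Nt * c)) / Real.log 2
  have hmean : ∫ ω, g ω ∂μ = Nt * Real.logb 2 (1 + ρ * Real.exp c) := by
    have hLc : ∫ ω, L ω ∂μ = Nt * c := by
      simp only [c]
      field_simp
    have haffine : Integrable (fun ω ↦ t * (L ω - Nt * c)) μ :=
      (hint.sub (integrable_const _)).const_mul t
    rw [integral_div, integral_add (integrable_const _) haffine, integral_const,
      integral_const_mul, integral_sub hint (integrable_const _), hLc]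
    simp [Real.logb, mul_div_assoc]
  have hg_le : ∀ᵐ ω ∂μ, g ω ≤ Real.logb 2 (((1 + (ρ : ℂ) • ((G ω)ᴴ * G ω)).det).re) := by
    filter_upwards [hpos] with ω hω
    simp only [g, Real.logb]
    gcongr
    simpa using hω.log_det_one_add_smul_re_ge hρ c
  calc ENNReal.ofReal (Nt * Real.logb 2 (1 + ρ * Real.exp c))
      = ENNReal.ofReal (∫ ω, g ω ∂μ) := by rw [hmean]
    _ ≤ ∫⁻ ω, ENNReal.ofReal (g ω) ∂μ := ofReal_integral_le_lintegral_ofReal g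
    _ ≤ _ := lintegral_mono_ae (hg_le.mono fun ω h ↦ ENNReal.ofReal_le_ofReal h)

/-- Capacity lower bound: E[log₂ det(I + ρ̄ GᴴG)] ≥ N_t log₂(1 + ρ̄ exp(E[ln det(GᴴG)]/N_t)). -/
theorem ergodic_capacity_lower_bound {Nr Nt : ℕ} (hle : Nt ≤ Nr)
    {Ω : Type*} [MeasurableSpace Ω] (μ : Measure Ω) [IsProbabilityMeasure μ]
    (G : Ω → Matrix (Fin Nr) (Fin Nt) ℂ)
    (hpos : ∀ᵐ ω ∂μ, ((G ω)ᴴ * G ω).PosDef)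
    (hint : Integrable (fun ω => Real.log ((((G ω)ᴴ * G ω).det).re)) μ)
    (ρ : ℝ) (hρ : 0 < ρ) :
    ENNReal.ofReal ((Nt : ℝ) * Real.logb 2
        (1 + ρ * Real.exp ((Nt : ℝ)⁻¹ * ∫ ω, Real.log ((((G ω)ᴴ * G ω).det).re) ∂μ)))
      ≤ ∫⁻ ω, ENNReal.ofReal (Real.logb 2 (((1 + (ρ : ℂ) • ((G ω)ᴴ * G ω)).det).re)) ∂μ :=
  ergodic_capacity_lower_bound_general μ G hpos hint ρ hρ
end

section
/- Let Ψ ∈ ℂ^{N_t×N_t} be Hermitian positive definite with eigenvalues ζ_1 ≥ ... ≥ ζ_{N_t} > 0 and let G̃ ∈ ℂ^{N_r×N_t} with N_t > N_r. Then ln det(G̃ Ψ G̃†) ≤ ln det(G̃ G̃†) + Σ_{i=1}^{N_r} ln ζ_i, provided det(G̃ G̃†) > 0. -/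
/-!
The function `d ↦ det (A diag(d) Aᴴ)` of real weights `d` is affine in each weight separately
(changing `dᵢ` is a rank-one update, so the matrix determinant lemma applies) and nonnegative
on the orthant `d ≥ 0`. Both coefficients of each affine slice are therefore nonnegative, so
moving `dᵢ` to a constant `c > 0` multiplies the value by at most `max (dᵢ / c) 1`. Writing
`Ψ = U diag(ζ) Uᴴ` and `A = G̃ U`, and taking for `c` the `(N_r + 1)`-th largest eigenvalue,
only the `N_r` largest eigenvalues contribute a factor `ζᵢ / c`, while at the constant weight
`det (A (c I) Aᴴ) = c ^ N_r det (G̃ G̃ᴴ)`.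
-/

open Matrix ComplexOrder

namespace Matrix

variable {m n R : Type*} [Fintype n] [DecidableEq n] [CommRing R]

theorem det_add_vecMulVec_piecewise (v u : n → R) (s : Finset n) (C : Matrix n n R) :
    det (C + vecMulVec (s.piecewise u 0) v) = det C + ∑ k ∈ s, u k * det (updateRow C k v) := by
  induction s using Finset.induction_on generalizing C with
  | empty => simp
  | @insert j s hj ih =>
    set M := C + vecMulVec (s.piecewise u 0) v
    have hMj : M j = C j := by ext; simp [M, vecMulVec_apply, hj]
    have hM : C + vecMulVec ((insert j s).piecewise u 0) v = updateRow M j (C j + u j • v) := by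
      ext k l
      rcases eq_or_ne k j with rfl | hkj
      · simp [M, vecMulVec_apply, Finset.piecewise_insert]
      · simp [M, vecMulVec_apply, Finset.piecewise_insert, hkj]
    have hMv : updateRow M j v = updateRow C j v + vecMulVec (s.piecewise u 0) v := by
      ext k l
      rcases eq_or_ne k j with rfl | hkj
      · simp [vecMulVec_apply, hj]
      · simp [M, hkj]
    have hvanish : ∀ k ∈ s, u k * det (updateRow (updateRow C j v) k v) = 0 := fun k hk => by
      have hkj : k ≠ j := ne_of_mem_of_not_mem hk hj
      rw [det_zero_of_row_eq hkj (by rw [updateRow_self, updateRow_ne hkj.symm, updateRow_self]),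
        mul_zero]
    rw [hM, det_updateRow_add, det_updateRow_smul, ← hMj, updateRow_eq_self, hMv, ih, ih,
      Finset.sum_eq_zero hvanish, Finset.sum_insert hj]
    ring

theorem det_add_vecMulVec (C : Matrix n n R) (u v : n → R) :
    det (C + vecMulVec u v) = det C + v ⬝ᵥ adjugate C *ᵥ u := by
  have h := det_add_vecMulVec_piecewise v u Finset.univ C
  rw [Finset.piecewise_univ] at h
  rw [h, dotProduct_mulVec, ← mulVec_transpose, adjugate_transpose, ← cramer_eq_adjugate_mulVec,
    dotProduct_comm]
  simp [dotProduct, cramer_transpose_apply]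

theorem mul_diagonal_update_mul [Fintype m] (A : Matrix m n R) (B : Matrix n m R) (d : n → R)
    (i : n) (t : R) :
    A * diagonal (Function.update d i t) * B
      = A * diagonal (Function.update d i 0) * B + t • vecMulVec (fun k => A k i) (B i) := by
  have hsplit : diagonal (Function.update d i t)
      = diagonal (Function.update d i 0) + diagonal (Pi.single i t) := by
    rw [diagonal_add]; congr 1; ext j; rcases eq_or_ne j i with rfl | hji <;> simp [*]
  have hsingle : A * diagonal (Pi.single i t) * B = t • vecMulVec (fun k => A k i) (B i) := by
    ext k l
    rw [Matrix.mul_assoc, mul_apply]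
    simp [diagonal_mul, Pi.single_apply, vecMulVec_apply]
    ring
  rw [hsplit, Matrix.mul_add, Matrix.add_mul, hsingle]

theorem det_mul_diagonal_update_mul [Fintype m] [DecidableEq m] (A : Matrix m n R)
    (B : Matrix n m R) (d : n → R) (i : n) (t : R) :
    det (A * diagonal (Function.update d i t) * B)
      = det (A * diagonal (Function.update d i 0) * B)
        + t * (B i ⬝ᵥ adjugate (A * diagonal (Function.update d i 0) * B) *ᵥ fun k => A k i) := by
  rw [mul_diagonal_update_mul, ← smul_vecMulVec, det_add_vecMulVec, mulVec_smul, dotProduct_smul,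
    smul_eq_mul]

end Matrix

section WeightedGramDet

variable {m n 𝕜 : Type*} [Fintype m] [DecidableEq m] [Fintype n] [DecidableEq n] [RCLike 𝕜]

noncomputable def weightedGramDet (A : Matrix m n 𝕜) (d : n → ℝ) : ℝ :=
  RCLike.re (det (A * diagonal (fun i => (d i : 𝕜)) * Aᴴ))

theorem weightedGramDet_nonneg (A : Matrix m n 𝕜) {d : n → ℝ} (hd : 0 ≤ d) :
    0 ≤ weightedGramDet A d := by
  have hD : (diagonal (fun i => (d i : 𝕜))).PosSemidef :=
    posSemidef_diagonal_iff.mpr fun i => RCLike.ofReal_nonneg.mpr (hd i)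
  exact (RCLike.nonneg_iff.mp (hD.mul_mul_conjTranspose_same A).det_nonneg).1

theorem exists_weightedGramDet_update_eq (A : Matrix m n 𝕜) (d : n → ℝ) (i : n) :
    ∃ a b : ℝ, ∀ t, weightedGramDet A (Function.update d i t) = a + b * t := by
  have hcoe (t : ℝ) : (fun j => ((Function.update d i t j : ℝ) : 𝕜))
      = Function.update (fun j => (d j : 𝕜)) i (t : 𝕜) :=
    funext fun j => Function.apply_update (fun _ (x : ℝ) => (x : 𝕜)) d i t j
  refine ⟨weightedGramDet A (Function.update d i 0), RCLike.re (Aᴴ i ⬝ᵥ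
    adjugate (A * diagonal (Function.update (fun j => (d j : 𝕜)) i 0) * Aᴴ) *ᵥ fun k => A k i),
    fun t => ?_⟩
  rw [weightedGramDet, weightedGramDet, hcoe, hcoe, RCLike.ofReal_zero, det_mul_diagonal_update_mul,
    map_add, RCLike.re_ofReal_mul, mul_comm t]

theorem weightedGramDet_const (A : Matrix m n 𝕜) (c : ℝ) :
    weightedGramDet A (fun _ => c) = c ^ Fintype.card m * RCLike.re (det (A * Aᴴ)) := by
  rw [weightedGramDet, ← smul_one_eq_diagonal, Matrix.mul_smul, Matrix.mul_one, Matrix.smul_mul,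
    det_smul, ← RCLike.ofReal_pow, RCLike.re_ofReal_mul]

end WeightedGramDet

theorem add_mul_le_max_div_one_mul {a b c s : ℝ} (h : ∀ t, 0 ≤ t → 0 ≤ a + b * t) (hc : 0 < c) :
    a + b * s ≤ max (s / c) 1 * (a + b * c) := by
  have ha : 0 ≤ a := by simpa using h 0 le_rfl
  have hb : 0 ≤ b := by
    by_contra! hb
    have := h ((a + 1) / -b) (div_nonneg (by linarith) (by linarith))
    rw [mul_div_assoc', mul_comm, mul_div_assoc, div_neg, div_self hb.ne] at this
    linarith
  have hmax : s ≤ max (s / c) 1 * c := (div_le_iff₀ hc).mp (le_max_left _ _)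
  nlinarith [mul_le_mul_of_nonneg_left hmax hb,
    mul_le_mul_of_nonneg_left (le_max_right (s / c) 1) ha]

theorem le_max_div_one_mul_update_of_affine {ι : Type*} [DecidableEq ι] {f : (ι → ℝ) → ℝ}
    (hf_affine : ∀ d i, ∃ a b : ℝ, ∀ t, f (Function.update d i t) = a + b * t)
    (hf_nonneg : ∀ d, 0 ≤ d → 0 ≤ f d) {c : ℝ} (hc : 0 < c) {d : ι → ℝ} (hd : 0 ≤ d) (j : ι) :
    f d ≤ max (d j / c) 1 * f (Function.update d j c) := by
  obtain ⟨a, b, hab⟩ := hf_affine d j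
  have hslice_nonneg (t : ℝ) (ht : 0 ≤ t) : 0 ≤ a + b * t :=
    hab t ▸ hf_nonneg _ (le_update_iff.mpr ⟨ht, fun k _ => hd k⟩)
  have h := add_mul_le_max_div_one_mul (s := d j) hslice_nonneg hc
  rwa [← hab (d j), ← hab c, Function.update_eq_self] at h

theorem le_prod_max_div_one_mul_of_affine {ι : Type*} [Fintype ι] [DecidableEq ι]
    {f : (ι → ℝ) → ℝ} (hf_affine : ∀ d i, ∃ a b : ℝ, ∀ t, f (Function.update d i t) = a + b * t)
    (hf_nonneg : ∀ d, 0 ≤ d → 0 ≤ f d) {c : ℝ} (hc : 0 < c) {d : ι → ℝ} (hd : 0 ≤ d) :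
    f d ≤ (∏ i, max (d i / c) 1) * f (fun _ => c) := by
  suffices h : ∀ s : Finset ι,
      f d ≤ (∏ i ∈ s, max (d i / c) 1) * f (s.piecewise (fun _ => c) d) by
    simpa using h Finset.univ
  intro s
  induction s using Finset.induction_on with
  | empty => simp
  | @insert j s hj ih =>
    have he : 0 ≤ s.piecewise (fun _ => c) d := Finset.le_piecewise_of_le_of_le s (fun _ => hc.le) hd
    have hstep := le_max_div_one_mul_update_of_affine hf_affine hf_nonneg hc he j
    rw [Finset.piecewise_eq_of_notMem _ _ _ hj] at hstep
    rw [Finset.prod_insert hj, Finset.piecewise_insert, mul_comm (max _ _), mul_assoc]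
    exact ih.trans (mul_le_mul_of_nonneg_left hstep
      (Finset.prod_nonneg fun i _ => zero_le_one.trans (le_max_right _ _)))

theorem Antitone.prod_max_div_one_mul_pow {n k : ℕ} {ζ : Fin n → ℝ} (hζ : Antitone ζ)
    (hk : k < n) (hc : 0 < ζ ⟨k, hk⟩) :
    (∏ i, max (ζ i / ζ ⟨k, hk⟩) 1) * ζ ⟨k, hk⟩ ^ k = ∏ i : Fin k, ζ (Fin.castLE hk.le i) := by
  have hhead (i : Fin k) :
      max (ζ (Fin.castLE hk.le i) / ζ ⟨k, hk⟩) 1 = ζ (Fin.castLE hk.le i) / ζ ⟨k, hk⟩ :=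
    max_eq_left ((one_le_div hc).mpr (hζ (Fin.le_def.mpr i.isLt.le)))
  have htail (i : Fin n) (hi : i ∉ Finset.univ.map (Fin.castLEEmb hk.le)) :
      max (ζ i / ζ ⟨k, hk⟩) 1 = 1 := by
    refine max_eq_right ((div_le_one hc).mpr (hζ (Fin.le_def.mpr ?_)))
    by_contra! h
    exact hi (Finset.mem_map.mpr ⟨⟨i, h⟩, Finset.mem_univ _, rfl⟩)
  rw [← Finset.prod_subset (Finset.subset_univ _) fun i _ hi => htail i hi, Finset.prod_map]
  simp only [Fin.castLEEmb_apply, hhead, Finset.prod_div_distrib, Finset.prod_const,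
    Finset.card_univ, Fintype.card_fin]
  exact div_mul_cancel₀ _ (pow_ne_zero _ hc.ne')

namespace Matrix

variable {m n 𝕜 : Type*} [Fintype n] [RCLike 𝕜]

theorem PosDef.mul_mul_conjTranspose_of_det_ne_zero [Fintype m] [DecidableEq m]
    {Ψ : Matrix n n 𝕜} (hΨ : Ψ.PosDef) {G : Matrix m n 𝕜} (hG : det (G * Gᴴ) ≠ 0) :
    (G * Ψ * Gᴴ).PosDef := by
  refine hΨ.mul_mul_conjTranspose_same (Function.Injective.of_comp (f := fun v => v ᵥ* Gᴴ) ?_)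
  simpa only [Function.comp_def, vecMul_vecMul] using
    vecMul_injective_iff_isUnit.mpr ((isUnit_iff_isUnit_det _).mpr hG.isUnit)

variable [DecidableEq n]

theorem mul_unitary_mul_conjTranspose (G : Matrix m n 𝕜) (U : unitaryGroup n 𝕜) :
    G * (U : Matrix n n 𝕜) * (G * (U : Matrix n n 𝕜))ᴴ = G * Gᴴ := by
  rw [conjTranspose_mul, Matrix.mul_assoc, ← Matrix.mul_assoc (U : Matrix n n 𝕜),
    ← star_eq_conjTranspose, mem_unitaryGroup_iff.mp U.2, Matrix.one_mul]

theorem IsHermitian.re_det_mul_mul_conjTranspose_eq [Fintype m] [DecidableEq m]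
    {Ψ : Matrix n n 𝕜} (hΨ : Ψ.IsHermitian) (G : Matrix m n 𝕜) :
    RCLike.re (det (G * Ψ * Gᴴ))
      = weightedGramDet (G * (hΨ.eigenvectorUnitary : Matrix n n 𝕜)) hΨ.eigenvalues := by
  conv_lhs => rw [hΨ.spectral_theorem, Unitary.conjStarAlgAut_apply]
  simp only [weightedGramDet, star_eq_conjTranspose, conjTranspose_mul, Matrix.mul_assoc,
    Function.comp_def]

end Matrix

/-- ln det(G̃ΨG̃ᴴ) ≤ ln det(G̃G̃ᴴ) + Σ of the logs of the N_r largest eigenvalues of Ψ. -/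
theorem log_det_mul_posDef_mul_le {Nr Nt : ℕ} (hlt : Nt > Nr)
    (Ψ : Matrix (Fin Nt) (Fin Nt) ℂ) (hΨ : Ψ.PosDef)
    (ζ : Fin Nt → ℝ) (hperm : ∃ σ : Equiv.Perm (Fin Nt), ζ = hΨ.1.eigenvalues ∘ σ)
    (hdec : Antitone ζ)
    (Gt : Matrix (Fin Nr) (Fin Nt) ℂ) (hdet : 0 < ((Gt * Gtᴴ).det).re) :
    Real.log (((Gt * Ψ * Gtᴴ).det).re)
      ≤ Real.log (((Gt * Gtᴴ).det).re) + ∑ i : Fin Nr, Real.log (ζ (Fin.castLE hlt.le i)) := by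
  obtain ⟨σ, rfl⟩ := hperm
  have hζ_pos (i : Fin Nt) : 0 < (hΨ.1.eigenvalues ∘ σ) i := hΨ.eigenvalues_pos (σ i)
  set A := Gt * (hΨ.1.eigenvectorUnitary : Matrix (Fin Nt) (Fin Nt) ℂ)
  set c := (hΨ.1.eigenvalues ∘ σ) ⟨Nr, hlt⟩
  have hbound : ((Gt * Ψ * Gtᴴ).det).re
      ≤ (∏ i : Fin Nr, (hΨ.1.eigenvalues ∘ σ) (Fin.castLE hlt.le i)) * ((Gt * Gtᴴ).det).re :=
    calc ((Gt * Ψ * Gtᴴ).det).re = weightedGramDet A hΨ.1.eigenvalues :=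
          hΨ.1.re_det_mul_mul_conjTranspose_eq Gt
      _ ≤ (∏ i, max (hΨ.1.eigenvalues i / c) 1) * weightedGramDet A (fun _ => c) :=
          le_prod_max_div_one_mul_of_affine (exists_weightedGramDet_update_eq A)
            (fun _ => weightedGramDet_nonneg A) (hζ_pos _) fun i => (hΨ.eigenvalues_pos i).le
      _ = (∏ i, max ((hΨ.1.eigenvalues ∘ σ) i / c) 1) * c ^ Nr * ((Gt * Gtᴴ).det).re := by
          rw [weightedGramDet_const, mul_unitary_mul_conjTranspose, Fintype.card_fin,
            ← Equiv.prod_comp σ, RCLike.re_to_complex, mul_assoc, Function.comp_def]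
      _ = _ := by rw [hdec.prod_max_div_one_mul_pow hlt (hζ_pos _)]
  have hdet_ne : (Gt * Gtᴴ).det ≠ 0 := fun h => by simp [h] at hdet
  have hpos := (Complex.pos_iff.mp (hΨ.mul_mul_conjTranspose_of_det_ne_zero hdet_ne).det_pos).1
  have hprod_pos := Finset.prod_pos fun (i : Fin Nr) (_ : i ∈ Finset.univ) =>
    hζ_pos (Fin.castLE hlt.le i)
  rw [← Real.log_prod fun i _ => (hζ_pos _).ne', ← Real.log_mul hdet.ne' hprod_pos.ne', mul_comm]
  exact Real.log_le_log hpos hbound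
end
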